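/- arXiv:2208.07086 — 4 statements merged into one kernel-verified Lean document; each statement's English description precedes it below -/
import Mathlib

section
/- The r-Stirling number satisfies the explicit formula S_r(K+r, j+r) counting partitions where the first r elements lie in distinct blocks can be written as Σ_{i=0}^{K} C(K, i) · S(i, j) · r^{K−i}, where S denotes the ordinary Stirling number of the second kind. -/
/-- Stirling numbers of the second kind, via the recurrence
`S(n+1, k+1) = (k+1)·S(n, k+1) + S(n, k)`. -/
def stirling : ℕ → ℕ → ℕ
  | 0, 0 => 1
  | 0, _ + 1 => 0
  | _ + 1, 0 => 0
  | n + 1, k + 1 => (k + 1) * stirling n (k + 1) + stirling n k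

/-- Auxiliary function: `rstirlingAux r m k = S_r(m + r, k)`, defined by the r-Stirling
recurrence with base case `S_r(r, k) = [k = r]`. -/
def rstirlingAux (r : ℕ) : ℕ → ℕ → ℕ
  | 0, k => if k = r then 1 else 0
  | _ + 1, 0 => 0
  | m + 1, k + 1 => (k + 1) * rstirlingAux r m (k + 1) + rstirlingAux r m k

/-- The r-Stirling numbers of the second kind `S_r(n, k)`: the number of partitions of an
`n`-element set into `k` nonempty blocks such that the first `r` elements lie in distinct
blocks, defined here through the standard recurrence. -/
def rstirling (r n k : ℕ) : ℕ := if r ≤ n then rstirlingAux r (n - r) k else 0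

/-!
Write `B_K(a) = ∑ C(K, i) a_i r^(K-i)`. Pascal's rule gives `B_{K+1}(a) = r B_K(a) + B_K(a ∘ succ)`,
and for the Stirling column `a_i = S(i, j+1)` the shifted column is `(j+1) S(·, j+1) + S(·, j)`.
Hence `K ↦ B_K(S(·, j))` obeys the recurrence `S_r(K+1, j+r+1) = (j+r+1) S_r(K, j+r+1) + S_r(K, j+r)`
with the same initial values, and so equals `S_r(K + r, j + r)`.
-/

open Finset

section BinomialTransform

variable {R : Type*} [CommSemiring R]

def binomialTransform (r : R) (a : ℕ → R) (n : ℕ) : R :=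
  ∑ i ∈ range (n + 1), (n.choose i : R) * (a i * r ^ (n - i))

theorem binomialTransform_zero (r : R) (a : ℕ → R) : binomialTransform r a 0 = a 0 := by
  simp [binomialTransform]

theorem binomialTransform_succ (r : R) (a : ℕ → R) (n : ℕ) :
    binomialTransform r a (n + 1) =
      r * binomialTransform r a n + binomialTransform r (fun i => a (i + 1)) n := by
  rw [binomialTransform, sum_choose_succ_mul (fun i k => a i * r ^ k), binomialTransform,
    binomialTransform, mul_sum]
  congr 1
  refine sum_congr rfl fun i hi => ?_
  rw [Nat.sub_add_comm (Nat.lt_succ_iff.mp (mem_range.mp hi)), pow_succ]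
  ring

theorem binomialTransform_add (r : R) (a b : ℕ → R) (n : ℕ) :
    binomialTransform r (fun i => a i + b i) n =
      binomialTransform r a n + binomialTransform r b n := by
  simp only [binomialTransform, ← sum_add_distrib, add_mul, mul_add]

theorem binomialTransform_const_mul (r c : R) (a : ℕ → R) (n : ℕ) :
    binomialTransform r (fun i => c * a i) n = c * binomialTransform r a n := by
  simp only [binomialTransform, mul_sum]
  exact sum_congr rfl fun i _ => by ring

end BinomialTransform

theorem stirling_zero_left (j : ℕ) : stirling 0 j = if j = 0 then 1 else 0 := by
  cases j <;> rfl

theorem rstirlingAux_of_lt {r k : ℕ} (m : ℕ) (hk : k < r) : rstirlingAux r m k = 0 := by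
  induction m generalizing k with
  | zero => simp [rstirlingAux, hk.ne]
  | succ m ih =>
    cases k with
    | zero => rfl
    | succ k => simp [rstirlingAux, ih hk, ih (Nat.lt_of_succ_lt hk)]

theorem rstirlingAux_succ_self (r m : ℕ) :
    rstirlingAux r (m + 1) r = r * rstirlingAux r m r := by
  cases r with
  | zero => simp [rstirlingAux]
  | succ s => simp [rstirlingAux, rstirlingAux_of_lt m (Nat.lt_succ_self s)]

theorem rstirlingAux_eq_binomialTransform (r m j : ℕ) :
    rstirlingAux r m (j + r) = binomialTransform r (fun i => stirling i j) m := by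
  induction m generalizing j with
  | zero => simp [rstirlingAux, binomialTransform_zero, stirling_zero_left]
  | succ m ih =>
    rw [binomialTransform_succ]
    cases j with
    | zero =>
      have hcol : (fun i => stirling (i + 1) 0) = fun _ => 0 := rfl
      have ih0 := ih 0
      rw [zero_add] at ih0 ⊢
      rw [rstirlingAux_succ_self, ih0, hcol]
      simp [binomialTransform]
    | succ j =>
      have hcol : (fun i => stirling (i + 1) (j + 1)) =
          fun i => (j + 1) * stirling i (j + 1) + stirling i j := rfl
      calc rstirlingAux r (m + 1) (j + 1 + r)
          = (j + 1 + r) * rstirlingAux r m (j + 1 + r) + rstirlingAux r m (j + r) := by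
            rw [Nat.add_right_comm]; rfl
        _ = _ := by
            rw [ih, ih, hcol, binomialTransform_add, binomialTransform_const_mul]
            ring

/-- The explicit formula for the r-Stirling numbers:
`S_r(K + r, j + r) = Σ_{i=0}^{K} C(K, i) · S(i, j) · r^{K−i}`. -/
theorem rstirling_explicit_formula (K j r : ℕ) :
    rstirling r (K + r) (j + r) =
      ∑ i ∈ Finset.range (K + 1), K.choose i * stirling i j * r ^ (K - i) := by
  rw [rstirling, if_pos (Nat.le_add_left r K), Nat.add_sub_cancel,
    rstirlingAux_eq_binomialTransform]
  simp only [binomialTransform, Nat.cast_id, mul_assoc]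
end

section
/- Under the beta-binomial partition prior with α = 1, as β → ∞ the probability of the one-block partition converges to 1, and as β → 0⁺ the probability of the all-singletons partition converges to 1. -/
/-- The real Beta function `B(a, b) = Γ(a)Γ(b)/Γ(a + b)`. -/
noncomputable def rBeta (a b : ℝ) : ℝ := Real.Gamma a * Real.Gamma b / Real.Gamma (a + b)

/-- The (adjusted) beta-binomial prior density over partitions of `{1, …, K}`:
`π(ρ | K, α, β) = C(K−1, |ρ|−1) · B(|ρ|−1+α, K−|ρ|+β) / (B(α, β) · S(K, |ρ|))`. -/
noncomputable def bbDensity (K : ℕ) (α β : ℝ)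
    (ρ : Finpartition (Finset.univ : Finset (Fin K))) : ℝ :=
  ((K - 1).choose (ρ.parts.card - 1) : ℝ) *
    rBeta ((ρ.parts.card : ℝ) - 1 + α) ((K : ℝ) - ρ.parts.card + β) /
    (rBeta α β * (stirling K ρ.parts.card : ℝ))

/-!
With `α = 1` the normalising constant collapses, since `B(1, b) = 1/b`. The one-block density
becomes `β / (K - 1 + β)`, which tends to `1` as `β → ∞`. The all-singletons density becomes
`Γ(K) Γ(β + 1) / Γ(K + β)`, which is continuous at `β = 0` and equals `1` there.
-/

open Filter Topology

lemma stirling_eq_zero_of_lt : ∀ {n k : ℕ}, n < k → stirling n k = 0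
  | 0, _ + 1, _ => rfl
  | n + 1, k + 1, h => by
    simp [stirling, stirling_eq_zero_of_lt (by omega : n < k + 1),
      stirling_eq_zero_of_lt (by omega : n < k)]

lemma stirling_self : ∀ n : ℕ, stirling n n = 1
  | 0 => rfl
  | n + 1 => by simp [stirling, stirling_eq_zero_of_lt (Nat.lt_succ_self n), stirling_self n]

lemma stirling_succ_one : ∀ n : ℕ, stirling (n + 1) 1 = 1
  | 0 => rfl
  | n + 1 => by rw [stirling, zero_add, one_mul, stirling_succ_one n]; rfl

lemma rBeta_one_left {x : ℝ} (hx : 0 < x) : rBeta 1 x = x⁻¹ := by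
  have hΓ : Real.Gamma x ≠ 0 := (Real.Gamma_pos_of_pos hx).ne'
  rw [rBeta, Real.Gamma_one, add_comm, Real.Gamma_add_one hx.ne']
  field_simp

lemma Real.continuousAt_Gamma_of_pos {x : ℝ} (hx : 0 < x) : ContinuousAt Real.Gamma x :=
  Real.differentiableOn_Gamma_Ioi.continuousOn.continuousAt (Ioi_mem_nhds hx)

lemma tendsto_div_const_add_atTop (c : ℝ) :
    Tendsto (fun x : ℝ => x / (c + x)) atTop (𝓝 1) := by
  have hshift : Tendsto (fun x : ℝ => c + x) atTop atTop :=
    tendsto_atTop_add_const_left _ c tendsto_id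
  have hsmall : Tendsto (fun x : ℝ => c / (c + x)) atTop (𝓝 0) :=
    tendsto_const_nhds.div_atTop hshift
  have hsub : Tendsto (fun x : ℝ => 1 - c / (c + x)) atTop (𝓝 1) := by
    simpa using tendsto_const_nhds.sub hsmall
  refine hsub.congr' ?_
  filter_upwards [hshift.eventually_gt_atTop 0] with x hx
  field_simp
  ring

lemma tendsto_Gamma_mul_Gamma_add_one_div_Gamma_add {a : ℝ} (ha : 0 < a) :
    Tendsto (fun x : ℝ => Real.Gamma a * Real.Gamma (x + 1) / Real.Gamma (a + x))
      (𝓝 0) (𝓝 1) := by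
  have hΓa : Real.Gamma a ≠ 0 := (Real.Gamma_pos_of_pos ha).ne'
  have hcont : ContinuousAt
      (fun x : ℝ => Real.Gamma a * Real.Gamma (x + 1) / Real.Gamma (a + x)) 0 := by
    refine (continuousAt_const.mul ?_).div ?_ (by simpa using hΓa)
    · exact (Real.continuousAt_Gamma_of_pos (by norm_num)).comp' (by fun_prop)
    · exact (Real.continuousAt_Gamma_of_pos (by simpa using ha)).comp' (by fun_prop)
  simpa [hΓa] using hcont.tendsto

section

variable {K : ℕ} {β : ℝ} {ρ : Finpartition (Finset.univ : Finset (Fin K))}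

lemma bbDensity_one_of_card_eq_one (hK : 1 ≤ K) (hρ : ρ.parts.card = 1) (hβ : 0 < β) :
    bbDensity K 1 β ρ = β / ((K : ℝ) - 1 + β) := by
  have hK' : (1 : ℝ) ≤ K := by exact_mod_cast hK
  obtain ⟨n, rfl⟩ : ∃ n, K = n + 1 := ⟨K - 1, by omega⟩
  rw [bbDensity, hρ, stirling_succ_one, rBeta_one_left hβ, Nat.cast_one, sub_self, zero_add,
    rBeta_one_left (by linarith), Nat.sub_self, Nat.choose_zero_right, Nat.cast_one]
  field_simp

lemma bbDensity_one_of_card_eq (hρ : ρ.parts.card = K) (hβ : 0 < β) :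
    bbDensity K 1 β ρ = Real.Gamma K * Real.Gamma (β + 1) / Real.Gamma (K + β) := by
  have hΓ : Real.Gamma β ≠ 0 := (Real.Gamma_pos_of_pos hβ).ne'
  rw [bbDensity, hρ, stirling_self, Nat.choose_self, sub_add_cancel, sub_self, zero_add,
    rBeta_one_left hβ, rBeta, Real.Gamma_add_one hβ.ne']
  field_simp

end

/-- Under the beta-binomial partition prior with `α = 1`, as `β → ∞` the
probability of the one-block partition converges to `1`, and as `β → 0⁺` the probability of
the all-singletons partition converges to `1`. -/
theorem bbDensity_limits (K : ℕ) (hK : 2 ≤ K)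
    (ρnull ρfull : Finpartition (Finset.univ : Finset (Fin K)))
    (hnull : ρnull.parts = {(Finset.univ : Finset (Fin K))})
    (hfull : ρfull.parts.card = K) :
    Filter.Tendsto (fun β : ℝ => bbDensity K 1 β ρnull) Filter.atTop (nhds 1) ∧
    Filter.Tendsto (fun β : ℝ => bbDensity K 1 β ρfull)
        (nhdsWithin 0 (Set.Ioi 0)) (nhds 1) := by
  have hK1 : 1 ≤ K := by omega
  constructor
  · have hcard : ρnull.parts.card = 1 := by rw [hnull, Finset.card_singleton]
    refine (tendsto_div_const_add_atTop ((K : ℝ) - 1)).congr' ?_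
    filter_upwards [eventually_gt_atTop 0] with β hβ
    rw [bbDensity_one_of_card_eq_one hK1 hcard hβ]
  · refine (tendsto_nhdsWithin_of_tendsto_nhds
      (tendsto_Gamma_mul_Gamma_add_one_div_Gamma_add (a := K) (by positivity))).congr' ?_
    filter_upwards [self_mem_nhdsWithin] with β hβ
    rw [bbDensity_one_of_card_eq hfull hβ]
end

section
/- The sequence j ↦ S(K+1, j)/S(K, j) − j is nondecreasing in j for 1 ≤ j ≤ K; equivalently, S(K+1, j+1)/S(K, j+1) − (j+1) ≥ S(K+1, j)/S(K, j) − j. -/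
namespace Nat

theorem stirlingSecond_pos {n k : ℕ} (hkn : k ≤ n) (hk : k ≠ 0) : 0 < stirlingSecond n k := by
  induction n generalizing k with
  | zero => omega
  | succ n ih =>
    obtain ⟨k, rfl⟩ := exists_eq_succ_of_ne_zero hk
    rcases hkn.lt_or_eq with hlt | heq
    · have := ih (by omega : k + 1 ≤ n) (succ_ne_zero k)
      rw [stirlingSecond_succ_succ]
      positivity
    · rw [heq, stirlingSecond_self]
      exact one_pos

theorem stirlingSecond_mul_le_mul {n k l : ℕ} (hkl : k ≤ l) :
    stirlingSecond n k * stirlingSecond n (l + 1) ≤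
      stirlingSecond n (k + 1) * stirlingSecond n l := by
  induction n generalizing k l with
  | zero => cases k <;> simp
  | succ n ih =>
    rcases hkl.eq_or_lt with rfl | hlt
    · rw [mul_comm]
    obtain _ | m := k
    · simp
    obtain ⟨p, rfl⟩ := Nat.exists_eq_add_of_le' (Nat.zero_lt_of_lt hlt)
    rw [stirlingSecond_succ_succ, stirlingSecond_succ_succ n (p + 1),
      stirlingSecond_succ_succ n (m + 1), stirlingSecond_succ_succ n p]
    have h11 := ih (k := m + 1) (l := p + 1) (by omega)
    have h02 := ih (k := m) (l := p + 1) (by omega)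
    have h01 := ih (k := m) (l := p) (by omega)
    have h10 := ih (k := m + 1) (l := p) (by omega)
    have hcoef : (m + 1) * (p + 2) ≤ (m + 2) * (p + 1) := by nlinarith
    have := Nat.mul_le_mul hcoef h11
    have := Nat.mul_le_mul_left (p + 2) h02
    have := Nat.mul_le_mul_left (m + 2) h10
    linarith

theorem cast_stirlingSecond_succ_div_sub {𝕜 : Type*} [Field 𝕜] {n k : ℕ}
    (h : (stirlingSecond n (k + 1) : 𝕜) ≠ 0) :
    (stirlingSecond (n + 1) (k + 1) : 𝕜) / stirlingSecond n (k + 1) - ((k : 𝕜) + 1) =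
      stirlingSecond n k / stirlingSecond n (k + 1) := by
  rw [stirlingSecond_succ_succ]
  push_cast
  field_simp
  ring

theorem cast_stirlingSecond_div_le_div {𝕜 : Type*} [Field 𝕜] [LinearOrder 𝕜]
    [IsStrictOrderedRing 𝕜] {n k : ℕ} (hk : k + 2 ≤ n) :
    (stirlingSecond n k : 𝕜) / stirlingSecond n (k + 1) ≤
      stirlingSecond n (k + 1) / stirlingSecond n (k + 2) := by
  rw [div_le_div_iff₀ (mod_cast stirlingSecond_pos (by omega) k.succ_ne_zero)
    (mod_cast stirlingSecond_pos hk (by omega))]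
  exact_mod_cast stirlingSecond_mul_le_mul k.le_succ

end Nat

theorem stirling_eq_stirlingSecond : stirling = Nat.stirlingSecond := by
  funext n k
  induction n generalizing k with
  | zero => cases k <;> rfl
  | succ n ih => cases k <;> simp [stirling, Nat.stirlingSecond_succ_succ, ih]

/-- The sequence `j ↦ S(K+1, j)/S(K, j) − j` is nondecreasing in `j`:
`S(K+1, j+1)/S(K, j+1) − (j+1) ≥ S(K+1, j)/S(K, j) − j` for `1 ≤ j ≤ K − 1`
(property 2 of Berg, 1975). -/
theorem stirling_ratio_monotone (K j : ℕ) (h1 : 1 ≤ j) (h2 : j ≤ K - 1) :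
    (stirling (K + 1) j : ℝ) / (stirling K j : ℝ) - (j : ℝ) ≤
      (stirling (K + 1) (j + 1) : ℝ) / (stirling K (j + 1) : ℝ) - ((j : ℝ) + 1) := by
  obtain ⟨k, rfl⟩ := Nat.exists_eq_add_of_le' h1
  have hne : ∀ i ≤ K, i ≠ 0 → (Nat.stirlingSecond K i : ℝ) ≠ 0 := fun i hiK hi =>
    Nat.cast_ne_zero.mpr (Nat.stirlingSecond_pos hiK hi).ne'
  rw [stirling_eq_stirlingSecond,
    Nat.cast_stirlingSecond_succ_div_sub (hne (k + 1 + 1) (by omega) (by omega)), Nat.cast_succ,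
    Nat.cast_stirlingSecond_succ_div_sub (hne (k + 1) (by omega) (by omega))]
  exact Nat.cast_stirlingSecond_div_le_div (by omega)
end

section
/- Under the uniform prior over partitions of {1,…,K}, conditional on the first j elements forming ℓ distinct blocks, the probability that element j+1 starts a new block is B_{K−j−1, ℓ+1} / (B_{K−j−1, ℓ+1} + ℓ·B_{K−j−1, ℓ}); equivalently, the number of partitions of {1,…,K} extending a given partition of {1,…,j} into ℓ blocks in which element j+1 is in a new block is B_{K−j−1, ℓ+1}, and the number in which it joins a specified existing block is B_{K−j−1, ℓ}. -/
/-- The r-Bell number `B_{n, r} = Σ_{i=0}^{n} S_r(n + r, i + r)`. -/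
def rbell (n r : ℕ) : ℕ := ∑ i ∈ Finset.range (n + 1), rstirling r (n + r) (i + r)

/-- Two elements are in the same block of the partition `ρ`. -/
def SamePart {K : ℕ} (ρ : Finpartition (Finset.univ : Finset (Fin K))) (i j : Fin K) : Prop :=
  ∃ b ∈ ρ.parts, i ∈ b ∧ j ∈ b

/-- `ρ`, a partition of `{1, …, K}`, extends `σ`, a partition of `{1, …, j}`: restricted to
the first `j` elements, `ρ` induces exactly the same-block relation of `σ`. -/
def ExtendsPart {j K : ℕ} (h : j ≤ K) (ρ : Finpartition (Finset.univ : Finset (Fin K)))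
    (σ : Finpartition (Finset.univ : Finset (Fin j))) : Prop :=
  ∀ a b : Fin j, SamePart ρ (Fin.castLE h a) (Fin.castLE h b) ↔ SamePart σ a b


/-!
Restricting a partition of `{1, …, K}` to `{1, …, j + 1}` fibres the extensions of `σ` over its
one-step extensions: element `j + 1` either opens a new block or joins one of the `ℓ` blocks
of `σ`. So everything reduces to counting the extensions to `{1, …, m + d}` of a partition of
`{1, …, m}` with `n` blocks. Peeling off element `m + 1` in the same way shows that this number
`E(d, n)` satisfies `E(0, n) = 1` and `E(d + 1, n) = E(d, n + 1) + n E(d, n)`, the recurrence of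
the r-Bell numbers `B_{d, n}`.
-/

open Finset

section RBell

lemma rbell_eq_sum_rstirlingAux (n r : ℕ) :
    rbell n r = ∑ i ∈ range (n + 1), rstirlingAux r n (i + r) := by
  simp [rbell, rstirling]

lemma rstirlingAux_eq_zero_of_lt {r k : ℕ} (hk : k < r) (m : ℕ) : rstirlingAux r m k = 0 := by
  induction m generalizing k with
  | zero => simp [rstirlingAux, hk.ne]
  | succ m ih =>
    cases k with
    | zero => rfl
    | succ k => simp [rstirlingAux, ih hk, ih (k := k) (by omega)]

lemma rstirlingAux_eq_zero_of_add_lt {r m k : ℕ} (hk : m + r < k) : rstirlingAux r m k = 0 := by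
  induction m generalizing k with
  | zero => simp [rstirlingAux]; omega
  | succ m ih =>
    cases k with
    | zero => rfl
    | succ k => simp [rstirlingAux, ih (k := k + 1) (by omega), ih (k := k) (by omega)]

lemma rstirlingAux_succ (r : ℕ) : ∀ m k, rstirlingAux r (m + 1) k =
    rstirlingAux (r + 1) m k + r * rstirlingAux r m k
  | 0, 0 => by simp [rstirlingAux]
  | 0, k + 1 => by simp only [rstirlingAux]; split_ifs <;> omega
  | m + 1, 0 => by simp [rstirlingAux]
  | m + 1, k + 1 => by
    show (k + 1) * rstirlingAux r (m + 1) (k + 1) + rstirlingAux r (m + 1) k =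
      ((k + 1) * rstirlingAux (r + 1) m (k + 1) + rstirlingAux (r + 1) m k) +
        r * ((k + 1) * rstirlingAux r m (k + 1) + rstirlingAux r m k)
    rw [rstirlingAux_succ r m (k + 1), rstirlingAux_succ r m k]
    ring

lemma rbell_zero_left (r : ℕ) : rbell 0 r = 1 := by
  simp [rbell_eq_sum_rstirlingAux, rstirlingAux]

lemma rbell_succ_left (n r : ℕ) : rbell (n + 1) r = rbell n (r + 1) + r * rbell n r := by
  simp only [rbell_eq_sum_rstirlingAux, rstirlingAux_succ, sum_add_distrib, ← mul_sum]
  congr 1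
  · rw [sum_range_succ', zero_add, rstirlingAux_eq_zero_of_lt (Nat.lt_succ_self r), add_zero]
    simp only [add_assoc, add_comm 1 r]
  · rw [sum_range_succ, rstirlingAux_eq_zero_of_add_lt (by omega), add_zero]

end RBell

namespace Setoid

instance {α : Type*} [Finite α] : Finite (Setoid α) :=
  Finite.of_injective (fun s : Setoid α => ⇑s) fun _ _ h =>
    Setoid.ext fun a b => Iff.of_eq (congrFun₂ h a b)

section Snoc

variable {m : ℕ} (s : Setoid (Fin m))

/-- The extension of `s` to `Fin (m + 1)` putting `Fin.last m` into the class `c` when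
`o = some c`, and into a new singleton class when `o = none`. -/
def snoc (o : Option (Quotient s)) : Setoid (Fin (m + 1)) :=
  ker (Fin.snoc (α := fun _ => Option (Quotient s)) (some ∘ Quotient.mk s) o)

@[simp]
lemma comap_castSucc_snoc (o : Option (Quotient s)) : (s.snoc o).comap Fin.castSucc = s := by
  ext a b
  rw [comap_rel, snoc, ker_def, Fin.snoc_castSucc, Fin.snoc_castSucc]
  simp [Quotient.eq]

@[simp]
lemma snoc_last_castSucc (o : Option (Quotient s)) (a : Fin m) :
    s.snoc o (Fin.last m) (Fin.castSucc a) ↔ o = some ⟦a⟧ := by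
  rw [snoc, ker_def, Fin.snoc_castSucc, Fin.snoc_last]
  simp

lemma ext_of_comap_castSucc {t t' : Setoid (Fin (m + 1))}
    (h : t.comap Fin.castSucc = t'.comap Fin.castSucc)
    (hlast : ∀ a, t (Fin.last m) (Fin.castSucc a) ↔ t' (Fin.last m) (Fin.castSucc a)) :
    t = t' := by
  ext x y
  induction x using Fin.lastCases <;> induction y using Fin.lastCases
  · exact iff_of_true (t.refl _) (t'.refl _)
  · exact hlast _
  · rw [t.comm', t'.comm']
    exact hlast _
  · exact Setoid.ext_iff.mp h _ _

lemma eq_snoc_iff {t : Setoid (Fin (m + 1))} {o : Option (Quotient s)} :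
    t = s.snoc o ↔
      t.comap Fin.castSucc = s ∧ ∀ a, t (Fin.last m) (Fin.castSucc a) ↔ o = some ⟦a⟧ := by
  constructor
  · rintro rfl
    exact ⟨comap_castSucc_snoc s o, snoc_last_castSucc s o⟩
  · rintro ⟨h, hlast⟩
    refine ext_of_comap_castSucc (by rw [h, comap_castSucc_snoc]) fun a => ?_
    rw [hlast, snoc_last_castSucc]

lemma eq_snoc_none_iff {t : Setoid (Fin (m + 1))} :
    t = s.snoc none ↔
      t.comap Fin.castSucc = s ∧ ∀ a, ¬ t (Fin.last m) (Fin.castSucc a) := by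
  simp [eq_snoc_iff]

lemma eq_snoc_some_iff {t : Setoid (Fin (m + 1))} {q : Quotient s} :
    t = s.snoc (some q) ↔
      t.comap Fin.castSucc = s ∧ ∃ a, ⟦a⟧ = q ∧ t (Fin.last m) (Fin.castSucc a) := by
  rw [eq_snoc_iff]
  constructor
  · rintro ⟨h, hlast⟩
    obtain ⟨a, rfl⟩ := q.exists_rep
    exact ⟨h, a, rfl, (hlast a).2 rfl⟩
  · rintro ⟨rfl, a₀, rfl, h₀⟩
    refine ⟨rfl, fun a => ?_⟩
    rw [Option.some_inj, Quotient.eq, comap_rel]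
    exact ⟨t.trans (t.symm h₀), t.trans h₀⟩

lemma snoc_injective : Function.Injective s.snoc := by
  intro o o' h
  have hlast : ∀ a, o = some ⟦a⟧ ↔ o' = some ⟦a⟧ := fun a => by
    rw [← snoc_last_castSucc, ← snoc_last_castSucc, h]
  cases o with
  | none =>
    cases o' with
    | none => rfl
    | some q =>
      obtain ⟨b, rfl⟩ := q.exists_rep
      simpa using (hlast b).2 rfl
  | some q =>
    obtain ⟨a, rfl⟩ := q.exists_rep
    exact ((hlast a).1 rfl).symm

lemma exists_snoc_eq {t : Setoid (Fin (m + 1))} (ht : t.comap Fin.castSucc = s) :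
    ∃ o, s.snoc o = t := by
  by_cases h : ∃ a, t (Fin.last m) (Fin.castSucc a)
  · obtain ⟨a, ha⟩ := h
    exact ⟨some ⟦a⟧, ((eq_snoc_some_iff s).2 ⟨ht, a, rfl, ha⟩).symm⟩
  · exact ⟨none, ((eq_snoc_none_iff s).2 ⟨ht, not_exists.mp h⟩).symm⟩

noncomputable def snocEquiv :
    Option (Quotient s) ≃ {t : Setoid (Fin (m + 1)) // t.comap Fin.castSucc = s} :=
  Equiv.ofBijective (fun o => ⟨s.snoc o, comap_castSucc_snoc s o⟩)
    ⟨fun _ _ h => snoc_injective s (congrArg Subtype.val h),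
      fun t => (exists_snoc_eq s t.2).imp fun _ h => Subtype.ext h⟩

@[simp]
lemma coe_snocEquiv (o : Option (Quotient s)) :
    (s.snocEquiv o : Setoid (Fin (m + 1))) = s.snoc o :=
  rfl

lemma range_snoc_some_comp_mk (o : Option (Quotient s)) :
    Set.range (Fin.snoc (α := fun _ => Option (Quotient s)) (some ∘ Quotient.mk s) o) =
      insert o (Set.range some) := by
  rw [Fin.range_snoc, Quotient.mk_surjective.range_comp]

lemma card_quotient_snoc_none :
    Nat.card (Quotient (s.snoc none)) = Nat.card (Quotient s) + 1 := by
  rw [snoc, Nat.card_congr (quotientKerEquivRange _), range_snoc_some_comp_mk,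
    Set.insert_none_range_some, Nat.card_univ, Finite.card_option]

lemma card_quotient_snoc_some (q : Quotient s) :
    Nat.card (Quotient (s.snoc (some q))) = Nat.card (Quotient s) := by
  rw [snoc, Nat.card_congr (quotientKerEquivRange _), range_snoc_some_comp_mk,
    Set.insert_eq_of_mem (Set.mem_range_self q),
    Nat.card_range_of_injective (Option.some_injective _)]

end Snoc

theorem card_comap_castLE_eq {m K : ℕ} (s : Setoid (Fin m)) (h : m ≤ K) :
    Nat.card {t : Setoid (Fin K) // t.comap (Fin.castLE h) = s} =
      rbell (K - m) (Nat.card (Quotient s)) := by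
  classical
  induction hd : K - m generalizing m with
  | zero =>
    obtain rfl : m = K := by omega
    rw [rbell_zero_left, Nat.card_eq_one_iff_unique]
    exact ⟨⟨fun t t' => Subtype.ext (t.2.trans t'.2.symm)⟩, ⟨⟨s, rfl⟩⟩⟩
  | succ d ih =>
    have h' : m + 1 ≤ K := by omega
    calc Nat.card {t : Setoid (Fin K) // t.comap (Fin.castLE h) = s}
        = Nat.card (Σ u : {u : Setoid (Fin (m + 1)) // u.comap Fin.castSucc = s},
            {t : Setoid (Fin K) // t.comap (Fin.castLE h') = u}) :=
          (Nat.card_congr (Equiv.sigmaSubtypeFiberEquivSubtype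
            (fun t : Setoid (Fin K) => t.comap (Fin.castLE h'))
            (p := fun t => t.comap (Fin.castLE h) = s) fun _ => Iff.rfl)).symm
      _ = Nat.card (Σ o : Option (Quotient s),
            {t : Setoid (Fin K) // t.comap (Fin.castLE h') = s.snoc o}) :=
          Nat.card_congr (Equiv.sigmaCongrLeft (snocEquiv s)).symm
      _ = ∑ o : Option (Quotient s), rbell d (Nat.card (Quotient (s.snoc o))) := by
          rw [Nat.card_sigma]
          exact Fintype.sum_congr _ _ fun o => ih _ h' (by omega)
      _ = rbell (d + 1) (Nat.card (Quotient s)) := by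
          simp only [Fintype.sum_option, card_quotient_snoc_none, card_quotient_snoc_some,
            sum_const, card_univ, smul_eq_mul, ← Nat.card_eq_fintype_card, rbell_succ_left]

end Setoid

namespace Finpartition

variable {α : Type*} [Fintype α] [DecidableEq α]

def toSetoid (ρ : Finpartition (univ : Finset α)) : Setoid α :=
  Setoid.ker ρ.part

lemma toSetoid_iff_mem_part {ρ : Finpartition (univ : Finset α)} {a b : α} :
    ρ.toSetoid a b ↔ a ∈ ρ.part b := by
  rw [toSetoid, Setoid.ker_def, ρ.mem_part_iff_part_eq_part (mem_univ a) (mem_univ b)]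

lemma image_part_univ (ρ : Finpartition (univ : Finset α)) : univ.image ρ.part = ρ.parts := by
  ext t
  simp only [mem_image, mem_univ, true_and]
  refine ⟨fun ⟨a, ha⟩ => ha ▸ ρ.part_mem.2 (mem_univ a), fun ht => ?_⟩
  obtain ⟨a, -, ha⟩ := ρ.part_surjOn ht
  exact ⟨a, ha⟩

lemma toSetoid_injective : Function.Injective (toSetoid (α := α)) := by
  intro ρ ρ' h
  have hpart : ρ.part = ρ'.part := by
    ext a b
    rw [← toSetoid_iff_mem_part, ← toSetoid_iff_mem_part, h]
  ext t
  rw [← image_part_univ, ← image_part_univ, hpart]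

lemma toSetoid_ofSetoid (s : Setoid α) [DecidableRel s] : (ofSetoid s).toSetoid = s := by
  ext a b
  rw [toSetoid_iff_mem_part, mem_part_ofSetoid_iff_rel, s.comm']

noncomputable def equivSetoid : Finpartition (univ : Finset α) ≃ Setoid α :=
  Equiv.ofBijective toSetoid
    ⟨toSetoid_injective, fun s => by classical exact ⟨ofSetoid s, toSetoid_ofSetoid s⟩⟩

lemma card_quotient_toSetoid (ρ : Finpartition (univ : Finset α)) :
    Nat.card (Quotient ρ.toSetoid) = #ρ.parts := by
  rw [toSetoid, Nat.card_congr (Setoid.quotientKerEquivRange _), ← Set.image_univ, ← coe_univ,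
    ← coe_image, image_part_univ, Nat.card_coe_set_eq, Set.ncard_coe_finset]

lemma mk_eq_mk_iff_mem {ρ : Finpartition (univ : Finset α)} {t : Finset α} (ht : t ∈ ρ.parts)
    {a₀ : α} (ha₀ : a₀ ∈ t) (a : α) :
    (⟦a⟧ : Quotient ρ.toSetoid) = ⟦a₀⟧ ↔ a ∈ t := by
  rw [Quotient.eq, toSetoid_iff_mem_part, ρ.part_eq_of_mem ht ha₀]

lemma card_toSetoid_comap_castLE_eq {m K : ℕ} (s : Setoid (Fin m)) (h : m ≤ K) :
    Nat.card {ρ : Finpartition (univ : Finset (Fin K)) // ρ.toSetoid.comap (Fin.castLE h) = s} =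
      rbell (K - m) (Nat.card (Quotient s)) := by
  rw [← Setoid.card_comap_castLE_eq s h]
  exact Nat.card_congr (equivSetoid.subtypeEquiv fun _ => Iff.rfl)

end Finpartition

open Finpartition

section Extension

variable {j K : ℕ} (ρ : Finpartition (univ : Finset (Fin K)))
  (σ : Finpartition (univ : Finset (Fin j)))

lemma samePart_iff_toSetoid {a b : Fin K} : SamePart ρ a b ↔ ρ.toSetoid a b := by
  rw [SamePart, ← mem_part_iff_exists, toSetoid_iff_mem_part]

lemma extendsPart_iff (h : j ≤ K) :
    ExtendsPart h ρ σ ↔ ρ.toSetoid.comap (Fin.castLE h) = σ.toSetoid := by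
  simp only [ExtendsPart, samePart_iff_toSetoid, Setoid.ext_iff, Setoid.comap_rel]

lemma extendsPart_and_forall_not_samePart_iff (hjK : j < K) :
    (ExtendsPart hjK.le ρ σ ∧ ∀ a : Fin j, ¬ SamePart ρ ⟨j, hjK⟩ (Fin.castLE hjK.le a)) ↔
      ρ.toSetoid.comap (Fin.castLE hjK) = σ.toSetoid.snoc none := by
  rw [Setoid.eq_snoc_none_iff, extendsPart_iff]
  simp only [samePart_iff_toSetoid]
  rfl

lemma extendsPart_and_exists_samePart_iff (hjK : j < K) {b : Finset (Fin j)} (hb : b ∈ σ.parts)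
    {a₀ : Fin j} (ha₀ : a₀ ∈ b) :
    (ExtendsPart hjK.le ρ σ ∧ ∃ a ∈ b, SamePart ρ ⟨j, hjK⟩ (Fin.castLE hjK.le a)) ↔
      ρ.toSetoid.comap (Fin.castLE hjK) = σ.toSetoid.snoc (some ⟦a₀⟧) := by
  rw [Setoid.eq_snoc_some_iff, extendsPart_iff]
  simp only [samePart_iff_toSetoid, mk_eq_mk_iff_mem hb ha₀]
  rfl

end Extension

/-- Under the uniform prior over partitions of `{1, …, K}`, conditional
on the first `j` elements forming `ℓ` distinct blocks (a fixed partition `σ`), the number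
of partitions of `{1, …, K}` extending `σ` in which element `j+1` is in a new block is
`B_{K−j−1, ℓ+1}`, the number in which it joins a specified existing block is
`B_{K−j−1, ℓ}`, and hence the probability that element `j+1` starts a new block is
`B_{K−j−1, ℓ+1} / (B_{K−j−1, ℓ+1} + ℓ · B_{K−j−1, ℓ})`. -/
theorem uniform_prior_new_block (K j ℓ : ℕ) (hjK : j < K)
    (σ : Finpartition (Finset.univ : Finset (Fin j))) (hσ : σ.parts.card = ℓ) :
    Nat.card {ρ : Finpartition (Finset.univ : Finset (Fin K)) //
        ExtendsPart hjK.le ρ σ ∧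
          ∀ a : Fin j, ¬ SamePart ρ ⟨j, hjK⟩ (Fin.castLE hjK.le a)} =
      rbell (K - j - 1) (ℓ + 1) ∧
    (∀ b ∈ σ.parts,
      Nat.card {ρ : Finpartition (Finset.univ : Finset (Fin K)) //
          ExtendsPart hjK.le ρ σ ∧
            ∃ a ∈ b, SamePart ρ ⟨j, hjK⟩ (Fin.castLE hjK.le a)} =
        rbell (K - j - 1) ℓ) ∧
    ((Nat.card {ρ : Finpartition (Finset.univ : Finset (Fin K)) //
          ExtendsPart hjK.le ρ σ ∧
            ∀ a : Fin j, ¬ SamePart ρ ⟨j, hjK⟩ (Fin.castLE hjK.le a)} : ℝ) /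
        (Nat.card {ρ : Finpartition (Finset.univ : Finset (Fin K)) //
          ExtendsPart hjK.le ρ σ} : ℝ) =
      (rbell (K - j - 1) (ℓ + 1) : ℝ) /
        ((rbell (K - j - 1) (ℓ + 1) : ℝ) + ℓ * (rbell (K - j - 1) ℓ : ℝ))) := by
  have hℓ : Nat.card (Quotient σ.toSetoid) = ℓ := by rw [card_quotient_toSetoid, hσ]
  have hnew : Nat.card {ρ : Finpartition (univ : Finset (Fin K)) //
      ExtendsPart hjK.le ρ σ ∧ ∀ a : Fin j, ¬ SamePart ρ ⟨j, hjK⟩ (Fin.castLE hjK.le a)} =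
        rbell (K - j - 1) (ℓ + 1) := by
    rw [Nat.card_congr (Equiv.subtypeEquivRight fun ρ =>
        extendsPart_and_forall_not_samePart_iff ρ σ hjK),
      card_toSetoid_comap_castLE_eq, Setoid.card_quotient_snoc_none, hℓ, Nat.sub_sub]
  have hjoin : ∀ b ∈ σ.parts, Nat.card {ρ : Finpartition (univ : Finset (Fin K)) //
      ExtendsPart hjK.le ρ σ ∧ ∃ a ∈ b, SamePart ρ ⟨j, hjK⟩ (Fin.castLE hjK.le a)} =
        rbell (K - j - 1) ℓ := by
    intro b hb
    obtain ⟨a₀, ha₀⟩ := σ.nonempty_of_mem_parts hb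
    rw [Nat.card_congr (Equiv.subtypeEquivRight fun ρ =>
        extendsPart_and_exists_samePart_iff ρ σ hjK hb ha₀),
      card_toSetoid_comap_castLE_eq, Setoid.card_quotient_snoc_some, hℓ, Nat.sub_sub]
  have htotal : Nat.card {ρ : Finpartition (univ : Finset (Fin K)) // ExtendsPart hjK.le ρ σ} =
      rbell (K - j - 1) (ℓ + 1) + ℓ * rbell (K - j - 1) ℓ := by
    rw [Nat.card_congr (Equiv.subtypeEquivRight fun ρ => extendsPart_iff ρ σ hjK.le),
      card_toSetoid_comap_castLE_eq, hℓ, ← rbell_succ_left, Nat.sub_one_add_one (by omega)]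
  refine ⟨hnew, hjoin, ?_⟩
  rw [hnew, htotal]
  push_cast
  rfl
end
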